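/- arXiv:1902.09355 — 10 statements merged into one kernel-verified Lean document; each statement's English description precedes it below -/
import Mathlib

section
/- Let ⟨R, ≤⟩ be a rulebook on Ξ and let x, y, z ∈ Ξ be realizations such that x ≲ y and y ≲ z. If r ∈ R is a rule such that either r(x) ≠ r(y) or r(y) ≠ r(z), then there exists a rule r' ∈ R with r ≤ r' and r'(x) < r'(z). -/
/-- A rulebook on `Ξ` is a finite index set `ι` of rules `rule : ι → Ξ → ℝ≥0`
together with a preorder `rle` on the rules.  The induced relation `≲` on
realizations: `x ≲ y` iff every rule preferring `y` is overridden by a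
strictly higher rule preferring `x`. -/
def RulebookLE {Ξ ι : Type*} (rule : ι → Ξ → NNReal) (rle : ι → ι → Prop)
    (x y : Ξ) : Prop :=
  ∀ i, rule i y < rule i x → ∃ j, (rle i j ∧ ¬ rle j i) ∧ rule j x < rule j y

/-- The induced strict relation `x ≺ y` iff `x ≲ y` and `¬ y ≲ x`. -/
def RulebookLT {Ξ ι : Type*} (rule : ι → Ξ → NNReal) (rle : ι → ι → Prop)
    (x y : Ξ) : Prop :=
  RulebookLE rule rle x y ∧ ¬ RulebookLE rule rle y x

lemma stmt0_aux {Ξ ι : Type*} [Finite ι]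
    (rule : ι → Ξ → NNReal) (rle : ι → ι → Prop)
    (hrefl : ∀ i, rle i i)
    (htrans : ∀ i j k, rle i j → rle j k → rle i k)
    (x y z : Ξ)
    (hxy : RulebookLE rule rle x y) (hyz : RulebookLE rule rle y z) :
    ∀ n (i : ι), Set.ncard {k | rle i k} ≤ n →
      (rule i x < rule i y ∨ rule i y < rule i z) →
      ∃ j, rle i j ∧ rule j x < rule j z := by
  intro n
  induction n with
  | zero =>
    intro i hcard _
    exfalso
    have : 0 < Set.ncard {k | rle i k} :=
      Set.ncard_pos (Set.toFinite _) |>.mpr ⟨i, hrefl i⟩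
    omega
  | succ n ih =>
    intro i hcard hi
    have step : ∀ j, rle i j → ¬ rle j i → Set.ncard {k | rle j k} ≤ n := by
      intro j hij hji
      have hsub : {k | rle j k} ⊂ {k | rle i k} := by
        constructor
        · intro k hk; exact htrans _ _ _ hij hk
        · intro hcon; exact hji (hcon (hrefl i))
      have := Set.ncard_lt_ncard hsub (Set.toFinite _)
      omega
    rcases hi with hlt | hlt
    · by_cases h2 : rule i y ≤ rule i z
      · exact ⟨i, hrefl i, lt_of_lt_of_le hlt h2⟩
      · push_neg at h2
        obtain ⟨j, ⟨hij, hji⟩, hj⟩ := hyz i h2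
        obtain ⟨l, hjl, hl⟩ := ih j (step j hij hji) (Or.inr hj)
        exact ⟨l, htrans _ _ _ hij hjl, hl⟩
    · by_cases h2 : rule i x ≤ rule i y
      · exact ⟨i, hrefl i, lt_of_le_of_lt h2 hlt⟩
      · push_neg at h2
        obtain ⟨j, ⟨hij, hji⟩, hj⟩ := hxy i h2
        obtain ⟨l, hjl, hl⟩ := ih j (step j hij hji) (Or.inl hj)
        exact ⟨l, htrans _ _ _ hij hjl, hl⟩

theorem stmt0 {Ξ ι : Type*} [Finite ι]
    (rule : ι → Ξ → NNReal) (rle : ι → ι → Prop)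
    (hrefl : ∀ i, rle i i)
    (htrans : ∀ i j k, rle i j → rle j k → rle i k)
    (x y z : Ξ)
    (hxy : RulebookLE rule rle x y) (hyz : RulebookLE rule rle y z)
    (r : ι) (h : rule r x ≠ rule r y ∨ rule r y ≠ rule r z) :
    ∃ r', rle r r' ∧ rule r' x < rule r' z := by
  have aux := stmt0_aux rule rle hrefl htrans x y z hxy hyz (Set.ncard {k | rle r k})
  rcases h with h | h
  · rcases lt_or_gt_of_ne h with hlt | hlt
    · exact aux r le_rfl (Or.inl hlt)
    · obtain ⟨j, ⟨hrj, hjr⟩, hj⟩ := hxy r hlt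
      obtain ⟨l, hjl, hl⟩ := stmt0_aux rule rle hrefl htrans x y z hxy hyz
        (Set.ncard {k | rle j k}) j le_rfl (Or.inl hj)
      exact ⟨l, htrans _ _ _ hrj hjl, hl⟩
  · rcases lt_or_gt_of_ne h with hlt | hlt
    · exact aux r le_rfl (Or.inr hlt)
    · obtain ⟨j, ⟨hrj, hjr⟩, hj⟩ := hyz r hlt
      obtain ⟨l, hjl, hl⟩ := stmt0_aux rule rle hrefl htrans x y z hxy hyz
        (Set.ncard {k | rle j k}) j le_rfl (Or.inr hj)
      exact ⟨l, htrans _ _ _ hrj hjl, hl⟩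
end

section
/- For any rulebook ⟨R, ≤⟩ on Ξ, the induced relation ≲ on Ξ is a preorder, i.e., it is reflexive and transitive. -/
theorem stmt1 {Ξ ι : Type*} [Finite ι]
    (rule : ι → Ξ → NNReal) (rle : ι → ι → Prop)
    (hrefl : ∀ i, rle i i)
    (htrans : ∀ i j k, rle i j → rle j k → rle i k) :
    (∀ x : Ξ, RulebookLE rule rle x x) ∧
    (∀ x y z : Ξ, RulebookLE rule rle x y → RulebookLE rule rle y z →
      RulebookLE rule rle x z) := by
  constructor
  · intro x i h
    exact absurd h (lt_irrefl _)
  · intro x y z hxy hyz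
    have hwf : WellFounded (fun j i => rle i j ∧ ¬ rle j i) := by
      have h1 : IsTrans ι (fun j i => rle i j ∧ ¬ rle j i) := ⟨fun a b c hab hbc =>
        ⟨htrans _ _ _ hbc.1 hab.1, fun h => hbc.2 (htrans _ _ _ hab.1 h)⟩⟩
      have h2 : IsIrrefl ι (fun j i => rle i j ∧ ¬ rle j i) := ⟨fun a h => h.2 h.1⟩
      exact Finite.wellFounded_of_trans_of_irrefl _
    have key : ∀ i, (rule i y < rule i x ∨ rule i z < rule i y) →
        ∃ j, (rle i j ∧ ¬ rle j i) ∧ rule j x < rule j z := by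
      intro i
      induction i using WellFounded.induction hwf with
      | _ i IH =>
        rintro (h | h)
        · obtain ⟨j, hij, hj⟩ := hxy i h
          rcases lt_or_ge (rule j x) (rule j z) with h' | h'
          · exact ⟨j, hij, h'⟩
          · obtain ⟨k, hjk, hk⟩ := IH j hij (Or.inr (lt_of_le_of_lt h' hj))
            exact ⟨k, ⟨htrans _ _ _ hij.1 hjk.1,
              fun h => hij.2 (htrans _ _ _ hjk.1 h)⟩, hk⟩
        · obtain ⟨j, hij, hj⟩ := hyz i h
          rcases lt_or_ge (rule j x) (rule j z) with h' | h'
          · exact ⟨j, hij, h'⟩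
          · obtain ⟨k, hjk, hk⟩ := IH j hij (Or.inl (lt_of_lt_of_le hj h'))
            exact ⟨k, ⟨htrans _ _ _ hij.1 hjk.1,
              fun h => hij.2 (htrans _ _ _ hjk.1 h)⟩, hk⟩
    intro i h
    rcases lt_or_ge (rule i y) (rule i x) with h' | h'
    · exact key i (Or.inl h')
    · exact key i (Or.inr (lt_of_lt_of_le h h'))
end

section
/- Let ⟨R, ≤⟩ be a rulebook on Ξ. For all realizations x, y ∈ Ξ, one has both x ≲ y and y ≲ x if and only if r(x) = r(y) for every rule r ∈ R. -/
theorem stmt2 {Ξ ι : Type*} [Finite ι]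
    (rule : ι → Ξ → NNReal) (rle : ι → ι → Prop)
    (hrefl : ∀ i, rle i i)
    (htrans : ∀ i j k, rle i j → rle j k → rle i k)
    (x y : Ξ) :
    (RulebookLE rule rle x y ∧ RulebookLE rule rle y x) ↔
      ∀ r : ι, rule r x = rule r y := by

  constructor
  · rintro ⟨hxy, hyx⟩
    have wf : WellFounded (fun j i : ι => rle i j ∧ ¬ rle j i) := by
      have ht : IsTrans ι (fun j i => rle i j ∧ ¬ rle j i) := ⟨by
        rintro a b c ⟨h1, h2⟩ ⟨h3, h4⟩
        exact ⟨htrans c b a h3 h1, fun h => h2 (htrans a c b h h3)⟩⟩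
      have hi : IsIrrefl ι (fun j i => rle i j ∧ ¬ rle j i) :=
        ⟨by rintro a ⟨h1, h2⟩; exact h2 h1⟩
      exact Finite.wellFounded_of_trans_of_irrefl _
    intro r
    induction r using wf.induction with
    | _ r ih =>
      by_contra h
      rcases lt_or_gt_of_ne h with hlt | hlt
      · obtain ⟨j, hj, hjlt⟩ := hyx r hlt
        exact absurd (ih j hj) hjlt.ne'
      · obtain ⟨j, hj, hjlt⟩ := hxy r hlt
        exact absurd (ih j hj) hjlt.ne
  · intro h
    constructor <;> intro i hi <;> simp [h i] at hi
end

section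
/- Let r₁, r₂, …, rₙ : Ξ → ℝ≥0 be rules and let ⟨R, ≤⟩ be the rulebook with R = {r₁, …, rₙ} in which ≤ is a linear order satisfying r₁ > r₂ > ⋯ > rₙ. Then for all x, y ∈ Ξ, x ≲ y holds if and only if the tuple (r₁(x), r₂(x), …, rₙ(x)) is less than or equal to the tuple (r₁(y), r₂(y), …, rₙ(y)) in the lexicographic order on ℝ≥0ⁿ. -/
/-! When the rules are ranked by a well-order, the rules overriding rule `i` are exactly the
earlier ones, so `x ≲ y` says that every coordinate where `x` exceeds `y` is preceded by one
where `x` is below `y`. Both this and the lexicographic comparison are decided by the first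
coordinate where `x` and `y` differ. -/

namespace Pi

variable {ι β : Type*} [LinearOrder ι] [LinearOrder β] {f g : ι → β}

theorem toLex_le_iff :
    toLex f ≤ toLex g ↔ (∀ i, f i = g i) ∨ ∃ i, (∀ j < i, f j = g j) ∧ f i < g i := by
  rw [le_iff_eq_or_lt, toLex_inj, funext_iff]
  rfl

theorem toLex_le_iff_forall_lt_imp_exists_lt [WellFoundedLT ι] :
    toLex f ≤ toLex g ↔ ∀ i, g i < f i → ∃ j < i, f j < g j := by
  constructor
  · intro hfg i hgf
    rcases toLex_le_iff.1 hfg with heq | ⟨k, heq_below, hlt⟩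
    · exact absurd (heq i) hgf.ne'
    rcases lt_trichotomy k i with hki | rfl | hik
    · exact ⟨k, hki, hlt⟩
    · exact absurd hlt hgf.not_gt
    · exact absurd (heq_below i hik) hgf.ne'
  · intro h
    by_contra! hgf
    obtain ⟨i, heq_below, hlt⟩ := hgf
    obtain ⟨j, hji, hfg⟩ := h i hlt
    exact hfg.ne (heq_below j hji).symm

end Pi

theorem rulebookLE_ge_iff {Ξ ι : Type*} [Preorder ι] (rule : ι → Ξ → NNReal) (x y : Ξ) :
    RulebookLE rule (fun i j => j ≤ i) x y ↔
      ∀ i, rule i y < rule i x → ∃ j < i, rule j x < rule j y := by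
  simp only [RulebookLE, ← lt_iff_le_not_ge]

theorem rulebookLE_ge_iff_toLex_le {Ξ ι : Type*} [LinearOrder ι] [WellFoundedLT ι]
    (rule : ι → Ξ → NNReal) (x y : Ξ) :
    RulebookLE rule (fun i j => j ≤ i) x y ↔
      toLex (fun i => rule i x) ≤ toLex (fun i => rule i y) :=
  (rulebookLE_ge_iff rule x y).trans Pi.toLex_le_iff_forall_lt_imp_exists_lt.symm

-- Rule `rₖ` is `rule (k - 1)`: index `0` has the highest priority.
/-- The rulebook `r₁ > r₂ > ⋯ > rₙ`: rule `i` has higher priority than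
rule `j` iff `j ≤ i` as indices in `Fin n` (index `0` is most important). -/
theorem stmt3 {Ξ : Type*} (n : ℕ) (rule : Fin n → Ξ → NNReal) (x y : Ξ) :
    RulebookLE rule (fun i j => j ≤ i) x y ↔
      ((∀ i, rule i x = rule i y) ∨
        ∃ i, (∀ j, j < i → rule j x = rule j y) ∧ rule i x < rule i y) :=
  (rulebookLE_ge_iff_toLex_le rule x y).trans Pi.toLex_le_iff
end

section
/- Let ⟨R₁, ≤₁⟩ and ⟨R₂, ≤₂⟩ be rulebooks on Ξ, and let φ : R₁ → R₂ be a surjective embedding of rulebooks. Let x, y ∈ Ξ be realizations such that x ≲₁ y. If r ∈ R₁ is a rule such that r(y) ≠ r(x), then there exists a rule u' ∈ R₂ such that φ(r) ≤₂ u' and u'(x) < u'(y). -/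
/-- A map `φ` between the rule sets of two rulebooks is aggregative if, for
every `u` in its image, the violation value of `u` respects the product
(pre)order of the values of the rules in `φ⁻¹(u)`, strictly so when some
preimage rule is strictly smaller. -/
def Aggregative {Ξ ι₁ ι₂ : Type*} (rule₁ : ι₁ → Ξ → NNReal)
    (rule₂ : ι₂ → Ξ → NNReal) (φ : ι₁ → ι₂) : Prop :=
  ∀ u, u ∈ Set.range φ → ∀ x y : Ξ,
    ((∀ i, φ i = u → rule₁ i x ≤ rule₁ i y) → rule₂ u x ≤ rule₂ u y) ∧
    ((∀ i, φ i = u → rule₁ i x ≤ rule₁ i y) →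
      (∃ i, φ i = u ∧ rule₁ i x < rule₁ i y) → rule₂ u x < rule₂ u y)

/-- An embedding of rulebooks: an aggregative map that is also an embedding
of preordered sets. -/
def RulebookEmbedding {Ξ ι₁ ι₂ : Type*} (rule₁ : ι₁ → Ξ → NNReal)
    (rle₁ : ι₁ → ι₁ → Prop) (rule₂ : ι₂ → Ξ → NNReal)
    (rle₂ : ι₂ → ι₂ → Prop) (φ : ι₁ → ι₂) : Prop :=
  Aggregative rule₁ rule₂ φ ∧
  (∀ r s, rle₁ r s → rle₂ (φ r) (φ s)) ∧
  (∀ r s, (rle₁ r s ∧ ¬ rle₁ s r) → (rle₂ (φ r) (φ s) ∧ ¬ rle₂ (φ s) (φ r)))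

theorem stmt8 {Ξ ι₁ ι₂ : Type*} [Finite ι₁] [Finite ι₂]
    (rule₁ : ι₁ → Ξ → NNReal) (rle₁ : ι₁ → ι₁ → Prop)
    (hrefl₁ : ∀ i, rle₁ i i) (htrans₁ : ∀ i j k, rle₁ i j → rle₁ j k → rle₁ i k)
    (rule₂ : ι₂ → Ξ → NNReal) (rle₂ : ι₂ → ι₂ → Prop)
    (hrefl₂ : ∀ i, rle₂ i i) (htrans₂ : ∀ i j k, rle₂ i j → rle₂ j k → rle₂ i k)
    (φ : ι₁ → ι₂) (hsurj : Function.Surjective φ)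
    (hemb : RulebookEmbedding rule₁ rle₁ rule₂ rle₂ φ)
    (x y : Ξ) (hxy : RulebookLE rule₁ rle₁ x y)
    (r : ι₁) (hr : rule₁ r y ≠ rule₁ r x) :
    ∃ u', rle₂ (φ r) u' ∧ rule₂ u' x < rule₂ u' y := by
  obtain ⟨hagg, hmono, hstrict⟩ := hemb
  set R : ι₂ → ι₂ → Prop := fun v u => rle₂ u v ∧ ¬ rle₂ v u with hR
  have hwf : WellFounded R := by
    have ht : IsTrans ι₂ R := ⟨fun a b c hab hbc =>
      ⟨htrans₂ _ _ _ hbc.1 hab.1, fun h => hab.2 (htrans₂ _ _ _ h hbc.1)⟩⟩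
    have hi : IsIrrefl ι₂ R := ⟨fun a h => h.2 h.1⟩
    exact Finite.wellFounded_of_trans_of_irrefl R
  have key : ∀ u : ι₂, (∃ s, φ s = u ∧ rule₁ s x < rule₁ s y) →
      ∃ u', rle₂ u u' ∧ rule₂ u' x < rule₂ u' y := by
    intro u
    induction u using hwf.induction with
    | _ u ih =>
      rintro ⟨s, hs, hsxy⟩
      by_cases hle : ∀ i, φ i = u → rule₁ i x ≤ rule₁ i y
      · exact ⟨u, hrefl₂ u, (hagg u ⟨s, hs⟩ x y).2 hle ⟨s, hs, hsxy⟩⟩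
      · push_neg at hle
        obtain ⟨i, hiu, hi⟩ := hle
        obtain ⟨j, hij, hjxy⟩ := hxy i hi
        have hlt2 : rle₂ u (φ j) ∧ ¬ rle₂ (φ j) u := by
          have := hstrict i j hij; rwa [hiu] at this
        obtain ⟨u', hu1, hu2⟩ := ih (φ j) ⟨hlt2.1, hlt2.2⟩ ⟨j, rfl, hjxy⟩
        exact ⟨u', htrans₂ _ _ _ hlt2.1 hu1, hu2⟩
  rcases hr.lt_or_gt with h | h
  · obtain ⟨j, hrj, hjxy⟩ := hxy r h
    obtain ⟨u', h1, h2⟩ := key (φ j) ⟨j, rfl, hjxy⟩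
    exact ⟨u', htrans₂ _ _ _ (hmono r j hrj.1) h1, h2⟩
  · exact key (φ r) ⟨r, rfl, h⟩
end

section
/- Let ⟨R₁, ≤₁⟩ and ⟨R₂, ≤₂⟩ be rulebooks on Ξ, inducing relations ≲₁, ≺₁ and ≲₂, ≺₂ on Ξ respectively. If there exists a surjective embedding of rulebooks φ : R₁ → R₂, then ≲₂ refines ≲₁; that is, for all x, y ∈ Ξ, x ≲₁ y implies x ≲₂ y, and x ≺₁ y implies x ≺₂ y. -/
theorem stmt9 {Ξ ι₁ ι₂ : Type*} [Finite ι₁] [Finite ι₂]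
    (rule₁ : ι₁ → Ξ → NNReal) (rle₁ : ι₁ → ι₁ → Prop)
    (hrefl₁ : ∀ i, rle₁ i i) (htrans₁ : ∀ i j k, rle₁ i j → rle₁ j k → rle₁ i k)
    (rule₂ : ι₂ → Ξ → NNReal) (rle₂ : ι₂ → ι₂ → Prop)
    (hrefl₂ : ∀ i, rle₂ i i) (htrans₂ : ∀ i j k, rle₂ i j → rle₂ j k → rle₂ i k)
    (φ : ι₁ → ι₂) (hsurj : Function.Surjective φ)
    (hemb : RulebookEmbedding rule₁ rle₁ rule₂ rle₂ φ) :
    (∀ x y : Ξ, RulebookLE rule₁ rle₁ x y → RulebookLE rule₂ rle₂ x y) ∧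
    (∀ x y : Ξ, RulebookLT rule₁ rle₁ x y → RulebookLT rule₂ rle₂ x y) := by
  obtain ⟨hagg, hmono, hstrict⟩ := hemb
  -- strict order on ι₂
  set slt : ι₂ → ι₂ → Prop := fun a b => rle₂ a b ∧ ¬ rle₂ b a with hslt
  have slt_trans : ∀ a b c, slt a b → slt b c → slt a c := by
    intro a b c ⟨h1, h2⟩ ⟨h3, h4⟩
    exact ⟨htrans₂ a b c h1 h3, fun h => h4 (htrans₂ c a b h h1)⟩
  -- well-foundedness of the reverse strict order
  haveI : IsTrans ι₂ (fun a b => slt b a) := ⟨fun a b c h1 h2 => slt_trans c b a h2 h1⟩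
  haveI : IsIrrefl ι₂ (fun a b => slt b a) := ⟨fun a ⟨h1, h2⟩ => h2 h1⟩
  have wf : WellFounded (fun a b : ι₂ => slt b a) :=
    Finite.wellFounded_of_trans_of_irrefl _
  -- contrapositive of the aggregative condition
  have hcontra : ∀ (u : ι₂) (x y : Ξ), ¬ rule₂ u x ≤ rule₂ u y →
      ∃ i, φ i = u ∧ rule₁ i y < rule₁ i x := by
    intro u x y h
    by_contra hc
    push_neg at hc
    exact h ((hagg u (hsurj u) x y).1 (fun i hi => hc i hi))
  -- Lemma C: lift a strict ι₁-witness to an ι₂-witness at or above v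
  have lemC : ∀ x y : Ξ, RulebookLE rule₁ rle₁ x y → ∀ v : ι₂,
      (∃ j, φ j = v ∧ rule₁ j x < rule₁ j y) →
      ∃ v', (v' = v ∨ slt v v') ∧ rule₂ v' x < rule₂ v' y := by
    intro x y h1
    intro v
    induction v using wf.induction with
    | _ v ih =>
      rintro ⟨j, hj, hjlt⟩
      by_cases hv : rule₂ v x < rule₂ v y
      · exact ⟨v, Or.inl rfl, hv⟩
      · -- some preimage of v strictly prefers x over y is violated... get i' with rule₁ i' y < rule₁ i' x
        have : ∃ i', φ i' = v ∧ rule₁ i' y < rule₁ i' x := by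
          by_contra hc
          push_neg at hc
          exact hv ((hagg v (hsurj v) x y).2 (fun i hi => hc i hi)
            ⟨j, hj, hjlt⟩)
        obtain ⟨i', hi', hi'lt⟩ := this
        obtain ⟨j', hj'o, hj'lt⟩ := h1 i' hi'lt
        have hvj' : slt v (φ j') := by
          rw [← hi']; exact hstrict i' j' hj'o
        obtain ⟨v'', hv''o, hv''lt⟩ := ih (φ j') hvj' ⟨j', rfl, hj'lt⟩
        refine ⟨v'', Or.inr ?_, hv''lt⟩
        rcases hv''o with rfl | h
        · exact hvj'
        · exact slt_trans _ _ _ hvj' h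
  -- Part 1
  have part1 : ∀ x y : Ξ, RulebookLE rule₁ rle₁ x y → RulebookLE rule₂ rle₂ x y := by
    intro x y h1 u hu
    obtain ⟨i, hi, hilt⟩ := hcontra u x y (not_le.mpr hu)
    obtain ⟨j, hjo, hjlt⟩ := h1 i hilt
    have huj : slt u (φ j) := by rw [← hi]; exact hstrict i j hjo
    obtain ⟨v', hv'o, hv'lt⟩ := lemC x y h1 (φ j) ⟨j, rfl, hjlt⟩
    refine ⟨v', ?_, hv'lt⟩
    rcases hv'o with rfl | h
    · exact huj
    · exact slt_trans _ _ _ huj h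
  refine ⟨part1, ?_⟩
  intro x y ⟨h1, h2⟩
  refine ⟨part1 x y h1, ?_⟩
  intro hyx2
  -- Lemma E: contradiction by well-founded ascent
  have lemE : ∀ v : ι₂, ¬ ∃ j, φ j = v ∧ rule₁ j x < rule₁ j y := by
    intro v
    induction v using wf.induction with
    | _ v ih =>
      rintro ⟨j, hj, hjlt⟩
      by_cases hv : rule₂ v x < rule₂ v y
      · obtain ⟨v₁, hv₁o, hv₁lt⟩ := hyx2 v hv
        obtain ⟨i₁, hi₁, hi₁lt⟩ := hcontra v₁ x y (not_le.mpr hv₁lt)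
        obtain ⟨j₁, hj₁o, hj₁lt⟩ := h1 i₁ hi₁lt
        have h2' : slt v₁ (φ j₁) := by rw [← hi₁]; exact hstrict i₁ j₁ hj₁o
        exact ih (φ j₁) (slt_trans _ _ _ hv₁o h2') ⟨j₁, rfl, hj₁lt⟩
      · have : ∃ i', φ i' = v ∧ rule₁ i' y < rule₁ i' x := by
          by_contra hc
          push_neg at hc
          exact hv ((hagg v (hsurj v) x y).2 (fun i hi => hc i hi)
            ⟨j, hj, hjlt⟩)
        obtain ⟨i', hi', hi'lt⟩ := this
        obtain ⟨j', hj'o, hj'lt⟩ := h1 i' hi'lt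
        have hvj' : slt v (φ j') := by rw [← hi']; exact hstrict i' j' hj'o
        exact ih (φ j') hvj' ⟨j', rfl, hj'lt⟩
  -- ¬ y ≲₁ x yields a strict witness
  apply h2
  intro i hixy
  exact absurd ⟨i, rfl, hixy⟩ (lemE (φ i))
end

section
/- Let ⟨R₁, ≤₁⟩ and ⟨R₂, ≤₂⟩ be rulebooks on Ξ, inducing strict relations ≺₁ and ≺₂ on Ξ respectively, and let φ : R₁ → R₂ be a dominant embedding of rulebooks, i.e., an embedding such that u <₂ φ(r) for every u ∈ R₂ \ φ(R₁) and every r ∈ R₁. Then for all realizations x, y ∈ Ξ, x ≺₁ y implies x ≺₂ y. -/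
theorem stmt10 {Ξ ι₁ ι₂ : Type*} [Finite ι₁] [Finite ι₂]
    (rule₁ : ι₁ → Ξ → NNReal) (rle₁ : ι₁ → ι₁ → Prop)
    (hrefl₁ : ∀ i, rle₁ i i) (htrans₁ : ∀ i j k, rle₁ i j → rle₁ j k → rle₁ i k)
    (rule₂ : ι₂ → Ξ → NNReal) (rle₂ : ι₂ → ι₂ → Prop)
    (hrefl₂ : ∀ i, rle₂ i i) (htrans₂ : ∀ i j k, rle₂ i j → rle₂ j k → rle₂ i k)
    (φ : ι₁ → ι₂)
    (hemb : RulebookEmbedding rule₁ rle₁ rule₂ rle₂ φ)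
    (hdom : ∀ u : ι₂, u ∉ Set.range φ → ∀ r : ι₁,
      rle₂ u (φ r) ∧ ¬ rle₂ (φ r) u)
    (x y : Ξ) (h : RulebookLT rule₁ rle₁ x y) :
    RulebookLT rule₂ rle₂ x y := by
  obtain ⟨hagg, hmono, hstrictmono⟩ := hemb
  obtain ⟨hxy, hnyx⟩ := h
  -- strict relation on ι₂
  set S2 : ι₂ → ι₂ → Prop := fun u v => rle₂ u v ∧ ¬ rle₂ v u with hS2
  have hS2trans : ∀ a b c, S2 a b → S2 b c → S2 a c := by
    intro a b c hab hbc
    refine ⟨htrans₂ _ _ _ hab.1 hbc.1, fun hca => hbc.2 (htrans₂ _ _ _ hca hab.1)⟩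
  have hS2le : ∀ a b c, S2 a b → rle₂ b c → S2 a c := by
    intro a b c hab hbc
    refine ⟨htrans₂ _ _ _ hab.1 hbc, fun hca => hab.2 (htrans₂ _ _ _ hbc hca)⟩
  -- well-founded reverse strict order on ι₁ via φ
  let R : ι₁ → ι₁ → Prop := fun a b => S2 (φ b) (φ a)
  haveI : IsTrans ι₁ R := ⟨fun a b c hab hbc => hS2trans _ _ _ hbc hab⟩
  haveI : IsIrrefl ι₁ R := ⟨fun a ha => ha.2 ha.1⟩
  have wf : WellFounded R := Finite.wellFounded_of_trans_of_irrefl R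
  -- extract a strict preimage witness from aggregativity
  have hpre : ∀ s : ι₁, ∀ z w : Ξ, rule₂ (φ s) w < rule₂ (φ s) z →
      ∃ s', φ s' = φ s ∧ rule₁ s' w < rule₁ s' z := by
    intro s z w hzw
    by_contra hc
    push_neg at hc
    exact absurd ((hagg (φ s) ⟨s, rfl⟩ z w).1 (fun i hi => hc i hi))
      (not_le.mpr hzw)
  -- key lemma: from a rule₁-witness, get a rule₂-witness weakly above it
  have lemA : ∀ i : ι₁, rule₁ i x < rule₁ i y →
      ∃ j : ι₁, rule₁ j x < rule₁ j y ∧ rle₂ (φ i) (φ j) ∧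
        rule₂ (φ j) x < rule₂ (φ j) y := by
    intro i hi
    have hne : Set.Nonempty {j : ι₁ | rule₁ j x < rule₁ j y ∧ rle₂ (φ i) (φ j)} :=
      ⟨i, hi, hrefl₂ _⟩
    obtain ⟨j, ⟨hj1, hj2⟩, hjmax⟩ := wf.has_min _ hne
    have hfib : ∀ j', φ j' = φ j → rule₁ j' x ≤ rule₁ j' y := by
      intro j' hj'
      by_contra hc
      obtain ⟨k, hk, hkxy⟩ := hxy j' (not_le.mp hc)
      have hk2 : S2 (φ j') (φ k) := hstrictmono _ _ hk
      have hkS : k ∈ {j : ι₁ | rule₁ j x < rule₁ j y ∧ rle₂ (φ i) (φ j)} :=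
        ⟨hkxy, htrans₂ _ _ _ hj2 (hj' ▸ hk2.1)⟩
      exact hjmax k hkS (show S2 (φ j) (φ k) by rw [← hj']; exact hk2)
    have := (hagg (φ j) ⟨j, rfl⟩ x y).2 hfib ⟨j, rfl, hj1⟩
    exact ⟨j, hj1, hj2, this⟩
  -- a rule₁-witness exists, from ¬ (y ≲₁ x)
  unfold RulebookLE at hnyx
  push_neg at hnyx
  obtain ⟨i₀, hi₀, -⟩ := hnyx
  constructor
  · -- x ≲₂ y
    intro u hu
    by_cases hur : u ∈ Set.range φ
    · obtain ⟨r, rfl⟩ := hur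
      obtain ⟨i₁, hi₁f, hi₁⟩ := hpre r x y hu
      obtain ⟨i, hlt, hixy⟩ := hxy i₁ hi₁
      obtain ⟨j, hjxy, hij, hj2⟩ := lemA i hixy
      have hs : S2 (φ i₁) (φ j) := hS2le _ _ _ (hstrictmono _ _ hlt) hij
      exact ⟨φ j, hi₁f ▸ hs, hj2⟩
    · obtain ⟨j, hjxy, -, hj2⟩ := lemA i₀ hi₀
      exact ⟨φ j, hdom u hur j, hj2⟩
  · -- ¬ y ≲₂ x
    intro hyx
    have hTne : Set.Nonempty {j : ι₁ | rule₂ (φ j) x < rule₂ (φ j) y} := by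
      obtain ⟨j, -, -, hj2⟩ := lemA i₀ hi₀
      exact ⟨j, hj2⟩
    obtain ⟨m, hm, hmmax⟩ := wf.has_min _ hTne
    obtain ⟨v, hv, hvyx⟩ := hyx (φ m) hm
    have hvr : v ∈ Set.range φ := by
      by_contra hvr
      exact (hdom v hvr m).2 hv.1
    obtain ⟨s, rfl⟩ := hvr
    obtain ⟨s', hs'f, hs'⟩ := hpre s x y hvyx
    obtain ⟨t, htlt, htxy⟩ := hxy s' hs'
    obtain ⟨j, hjxy, htj, hj2⟩ := lemA t htxy
    have h1 : S2 (φ m) (φ t) :=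
      hS2trans _ _ _ hv (hs'f ▸ hstrictmono _ _ htlt)
    exact hmmax j hj2 (hS2le _ _ _ h1 htj)
end

section
/- Let R be a finite set of rules on Ξ, and let ≤₁ and ≤₂ be two preorders on R such that ≤₂ refines ≤₁ (i.e., r ≤₁ s implies r ≤₂ s and r <₁ s implies r <₂ s for all r, s ∈ R). Let ≺₁ and ≺₂ be the strict relations on Ξ induced by the rulebooks ⟨R, ≤₁⟩ and ⟨R, ≤₂⟩ respectively. Then for all x, y ∈ Ξ, x ≺₁ y implies x ≺₂ y. -/
theorem stmt11 {Ξ ι : Type*} [Finite ι]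
    (rule : ι → Ξ → NNReal)
    (rle₁ : ι → ι → Prop)
    (hrefl₁ : ∀ i, rle₁ i i) (htrans₁ : ∀ i j k, rle₁ i j → rle₁ j k → rle₁ i k)
    (rle₂ : ι → ι → Prop)
    (hrefl₂ : ∀ i, rle₂ i i) (htrans₂ : ∀ i j k, rle₂ i j → rle₂ j k → rle₂ i k)
    (hrefines : ∀ r s, rle₁ r s → rle₂ r s)
    (hrefines' : ∀ r s, (rle₁ r s ∧ ¬ rle₁ s r) → (rle₂ r s ∧ ¬ rle₂ s r))
    (x y : Ξ) (h : RulebookLT rule rle₁ x y) :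
    RulebookLT rule rle₂ x y := by
  obtain ⟨h1, h2⟩ := h
  set s₂ : ι → ι → Prop := fun a b => rle₂ a b ∧ ¬ rle₂ b a with hs₂
  have hstrans : ∀ a b c, s₂ a b → s₂ b c → s₂ a c := by
    rintro a b c ⟨hab, hba⟩ ⟨hbc, hcb⟩
    exact ⟨htrans₂ _ _ _ hab hbc, fun hca => hba (htrans₂ _ _ _ hbc hca)⟩
  have hirr : ∀ a, ¬ s₂ a a := by rintro a ⟨h', h''⟩; exact h'' h'
  have hwf : WellFounded (Function.swap s₂) := by
    haveI : IsTrans ι (Function.swap s₂) :=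
      ⟨fun a b c hab hbc => hstrans _ _ _ hbc hab⟩
    haveI : IsIrrefl ι (Function.swap s₂) := ⟨hirr⟩
    exact Finite.wellFounded_of_trans_of_irrefl _
  constructor
  · intro i hi
    obtain ⟨j, hj1, hj2⟩ := h1 i hi
    exact ⟨j, hrefines' _ _ hj1, hj2⟩
  · intro h2'
    apply h2
    have key : ∀ i, ¬ rule i x < rule i y := by
      intro i
      induction i using hwf.induction with
      | _ i ih =>
        intro hi
        obtain ⟨j, hj1, hj2⟩ := h2' i hi
        obtain ⟨m, hm1, hm2⟩ := h1 j hj2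
        exact ih m (hstrans _ _ _ hj1 (hrefines' _ _ hm1)) hm2
    intro i hi
    exact absurd hi (key i)
end

section
/- Let ⟨R₁, ≤₁⟩ be a rulebook on Ξ containing two distinct rules r₁, r₂ ∈ R₁ in the same equivalence class (r₁ ≤₁ r₂ and r₂ ≤₁ r₁). Let α : ℝ≥0 × ℝ≥0 → ℝ≥0 be monotone and strictly monotone in each argument, i.e., a₁ ≤ b₁ and a₂ ≤ b₂ imply α(a₁,a₂) ≤ α(b₁,b₂), and if additionally a₁ < b₁ or a₂ < b₂ then α(a₁,a₂) < α(b₁,b₂). Define the aggregated rule r'(x) = α(r₁(x), r₂(x)) and the rulebook ⟨R₂, ≤₂⟩ with R₂ = (R₁ \ {r₁, r₂}) ∪ {r'}, where for s, t ∈ R₁ \ {r₁, r₂}: s ≤₂ t iff s ≤₁ t, s ≤₂ r' iff s ≤₁ r₁, r' ≤₂ s iff r₁ ≤₁ s, and r' ≤₂ r'. Then for the induced strict relations on Ξ, x ≺₁ y implies x ≺₂ y for all x, y ∈ Ξ. -/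
/-- Rule aggregation: two equivalent rules `r₁, r₂` of a rulebook are collapsed
into the single rule `x ↦ α (r₁ x) (r₂ x)`.  The new rulebook is indexed by
`Option {i // i ≠ i₁ ∧ i ≠ i₂}`, where `none` stands for the aggregated rule
and `some i` for the remaining rules.  The induced strict order on
realizations is preserved. -/
theorem stmt12 {Ξ ι : Type*} [Finite ι]
    (rule : ι → Ξ → NNReal) (rle : ι → ι → Prop)
    (hrefl : ∀ i, rle i i) (htrans : ∀ i j k, rle i j → rle j k → rle i k)
    (i₁ i₂ : ι) (hne : i₁ ≠ i₂) (heq₁ : rle i₁ i₂) (heq₂ : rle i₂ i₁)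
    (α : NNReal → NNReal → NNReal)
    (hmono : ∀ a₁ a₂ b₁ b₂, a₁ ≤ b₁ → a₂ ≤ b₂ → α a₁ a₂ ≤ α b₁ b₂)
    (hstrict : ∀ a₁ a₂ b₁ b₂, a₁ ≤ b₁ → a₂ ≤ b₂ → (a₁ < b₁ ∨ a₂ < b₂) →
      α a₁ a₂ < α b₁ b₂)
    (rule₂ : Option {i : ι // i ≠ i₁ ∧ i ≠ i₂} → Ξ → NNReal)
    (hrule₂some : ∀ i : {i : ι // i ≠ i₁ ∧ i ≠ i₂}, rule₂ (some i) = rule i.1)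
    (hrule₂none : ∀ x : Ξ, rule₂ none x = α (rule i₁ x) (rule i₂ x))
    (rle₂ : Option {i : ι // i ≠ i₁ ∧ i ≠ i₂} →
      Option {i : ι // i ≠ i₁ ∧ i ≠ i₂} → Prop)
    (h₁ : ∀ s t : {i : ι // i ≠ i₁ ∧ i ≠ i₂},
      rle₂ (some s) (some t) ↔ rle s.1 t.1)
    (h₂ : ∀ s : {i : ι // i ≠ i₁ ∧ i ≠ i₂}, rle₂ (some s) none ↔ rle s.1 i₁)
    (h₃ : ∀ s : {i : ι // i ≠ i₁ ∧ i ≠ i₂}, rle₂ none (some s) ↔ rle i₁ s.1)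
    (h₄ : rle₂ none none)
    (x y : Ξ) (h : RulebookLT rule rle x y) :
    RulebookLT rule₂ rle₂ x y := by
  obtain ⟨hxy, hnyx⟩ := h
  have contra_mono : ∀ p q p' q' : NNReal, α p q < α p' q' → p < p' ∨ q < q' := by
    intro p q p' q' hlt
    by_contra hc
    push_neg at hc
    exact absurd (hmono p' q' p q hc.1 hc.2) (not_le.mpr hlt)
  -- j > i₂ implies j ∉ {i₁, i₂}
  have notin₂ : ∀ j, rle i₂ j → ¬ rle j i₂ → j ≠ i₁ ∧ j ≠ i₂ := by
    intro j hle hnle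
    constructor
    · intro hh; rw [hh] at hnle; exact hnle heq₁
    · intro hh; rw [hh] at hnle; exact hnle (hrefl i₂)
  have notin₁ : ∀ j, rle i₁ j → ¬ rle j i₁ → j ≠ i₁ ∧ j ≠ i₂ := by
    intro j hle hnle
    constructor
    · intro hh; rw [hh] at hnle; exact hnle (hrefl i₁)
    · intro hh; rw [hh] at hnle; exact hnle heq₂
  constructor
  · -- RulebookLE rule₂ rle₂ x y
    intro o ho
    cases o with
    | none =>
        rw [hrule₂none, hrule₂none] at ho
        rcases contra_mono _ _ _ _ ho with h1 | h2
        · obtain ⟨j, ⟨hle, hnle⟩, hj⟩ := hxy i₁ h1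
          obtain ⟨hj1, hj2⟩ := notin₁ j hle hnle
          refine ⟨some ⟨j, hj1, hj2⟩, ⟨(h₃ _).mpr hle, ?_⟩, ?_⟩
          · intro hc; exact hnle ((h₂ _).mp hc)
          · rw [hrule₂some]; exact hj
        · obtain ⟨j, ⟨hle, hnle⟩, hj⟩ := hxy i₂ h2
          obtain ⟨hj1, hj2⟩ := notin₂ j hle hnle
          refine ⟨some ⟨j, hj1, hj2⟩, ⟨(h₃ _).mpr (htrans _ _ _ heq₁ hle), ?_⟩, ?_⟩
          · intro hc; exact hnle (htrans _ _ _ ((h₂ _).mp hc) heq₁)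
          · rw [hrule₂some]; exact hj
    | some i =>
        rw [hrule₂some] at ho
        obtain ⟨j, ⟨hle, hnle⟩, hj⟩ := hxy i.1 ho
        by_cases hj1 : j = i₁
        · subst hj1
          by_cases hc : rule i₂ x ≤ rule i₂ y
          · refine ⟨none, ⟨(h₂ _).mpr hle, ?_⟩, ?_⟩
            · intro hcc; exact hnle ((h₃ _).mp hcc)
            · rw [hrule₂none, hrule₂none]
              exact hstrict _ _ _ _ hj.le hc (Or.inl hj)
          · push_neg at hc
            obtain ⟨j', ⟨hle', hnle'⟩, hj'⟩ := hxy i₂ hc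
            obtain ⟨hj'1, hj'2⟩ := notin₂ j' hle' hnle'
            refine ⟨some ⟨j', hj'1, hj'2⟩,
              ⟨(h₁ _ _).mpr (htrans _ _ _ hle (htrans _ _ _ heq₁ hle')), ?_⟩, ?_⟩
            · intro hcc
              exact hnle' (htrans _ _ _ (htrans _ _ _ ((h₁ _ _).mp hcc) hle) heq₁)
            · rw [hrule₂some]; exact hj'
        · by_cases hj2 : j = i₂
          · subst hj2
            by_cases hc : rule i₁ x ≤ rule i₁ y
            · refine ⟨none, ⟨(h₂ _).mpr (htrans _ _ _ hle heq₂), ?_⟩, ?_⟩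
              · intro hcc; exact hnle (htrans _ _ _ heq₂ ((h₃ _).mp hcc))
              · rw [hrule₂none, hrule₂none]
                exact hstrict _ _ _ _ hc hj.le (Or.inr hj)
            · push_neg at hc
              obtain ⟨j', ⟨hle', hnle'⟩, hj'⟩ := hxy i₁ hc
              obtain ⟨hj'1, hj'2⟩ := notin₁ j' hle' hnle'
              refine ⟨some ⟨j', hj'1, hj'2⟩,
                ⟨(h₁ _ _).mpr (htrans _ _ _ hle (htrans _ _ _ heq₂ hle')), ?_⟩, ?_⟩
              · intro hcc
                exact hnle' (htrans _ _ _ (htrans _ _ _ ((h₁ _ _).mp hcc) hle) heq₂)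
              · rw [hrule₂some]; exact hj'
          · refine ⟨some ⟨j, hj1, hj2⟩, ⟨(h₁ _ _).mpr hle, ?_⟩, ?_⟩
            · intro hcc; exact hnle ((h₁ _ _).mp hcc)
            · rw [hrule₂some]; exact hj
  · -- ¬ RulebookLE rule₂ rle₂ y x
    intro hyx2
    apply hnyx
    -- we derive a contradiction; so it suffices to show False
    exfalso
    rw [RulebookLE] at hnyx
    push_neg at hnyx
    obtain ⟨i₀, hlt₀, hall₀'⟩ := hnyx
    have hall₀ : ∀ j, rle i₀ j → ¬ rle j i₀ → rule j x ≤ rule j y :=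
      fun j a b => hall₀' j ⟨a, b⟩
    -- key: a "bad" witness outside {i₁, i₂} yields a contradiction with hyx2
    have keyA : ∀ (i₀ : ι) (hn1 : i₀ ≠ i₁) (hn2 : i₀ ≠ i₂),
        rule i₀ x < rule i₀ y →
        (∀ j, rle i₀ j → ¬ rle j i₀ → rule j x ≤ rule j y) → False := by
      intro i₀ hn1 hn2 hlt hall
      obtain ⟨j₂, ⟨hle, hnle⟩, hlt2⟩ :=
        hyx2 (some ⟨i₀, hn1, hn2⟩) (by rw [hrule₂some]; exact hlt)
      cases j₂ with
      | some j =>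
          rw [hrule₂some] at hlt2
          have hle' : rle i₀ j.1 := (h₁ _ _).mp hle
          have hnle' : ¬ rle j.1 i₀ := fun hc => hnle ((h₁ _ _).mpr hc)
          exact absurd hlt2 (not_lt.mpr (hall j.1 hle' hnle'))
      | none =>
          rw [hrule₂none, hrule₂none] at hlt2
          have hle1 : rle i₀ i₁ := (h₂ _).mp hle
          have hnle1 : ¬ rle i₁ i₀ := fun hc => hnle ((h₃ _).mpr hc)
          have hle2 : rle i₀ i₂ := htrans _ _ _ hle1 heq₁
          have hnle2 : ¬ rle i₂ i₀ := fun hc => hnle1 (htrans _ _ _ heq₁ hc)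
          have k1 := hall i₁ hle1 hnle1
          have k2 := hall i₂ hle2 hnle2
          exact absurd (hmono _ _ _ _ k1 k2) (not_le.mpr hlt2)
    by_cases hn1 : i₀ = i₁
    · subst hn1
      by_cases hc : rule i₂ y < rule i₂ x
      · obtain ⟨j', ⟨hle', hnle'⟩, hj'⟩ := hxy i₂ hc
        obtain ⟨hj'1, hj'2⟩ := notin₂ j' hle' hnle'
        have hi₁j' : rle i₀ j' := htrans _ _ _ heq₁ hle'
        refine keyA j' hj'1 hj'2 hj' ?_
        intro k hk1 hk2
        refine hall₀ k (htrans _ _ _ hi₁j' hk1) ?_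
        intro hcc
        exact hk2 (htrans _ _ _ hcc hi₁j')
      · push_neg at hc
        have hnone : rule₂ none x < rule₂ none y := by
          rw [hrule₂none, hrule₂none]
          exact hstrict _ _ _ _ hlt₀.le hc (Or.inl hlt₀)
        obtain ⟨j₂, ⟨hle, hnle⟩, hlt2⟩ := hyx2 none hnone
        cases j₂ with
        | some j =>
            rw [hrule₂some] at hlt2
            have hle' : rle i₀ j.1 := (h₃ _).mp hle
            have hnle' : ¬ rle j.1 i₀ := fun hcc => hnle ((h₂ _).mpr hcc)
            exact absurd hlt2 (not_lt.mpr (hall₀ j.1 hle' hnle'))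
        | none => exact hnle h₄
    · by_cases hn2 : i₀ = i₂
      · subst hn2
        by_cases hc : rule i₁ y < rule i₁ x
        · obtain ⟨j', ⟨hle', hnle'⟩, hj'⟩ := hxy i₁ hc
          obtain ⟨hj'1, hj'2⟩ := notin₁ j' hle' hnle'
          have hi₂j' : rle i₀ j' := htrans _ _ _ heq₂ hle'
          refine keyA j' hj'1 hj'2 hj' ?_
          intro k hk1 hk2
          refine hall₀ k (htrans _ _ _ hi₂j' hk1) ?_
          intro hcc
          exact hk2 (htrans _ _ _ hcc hi₂j')
        · push_neg at hc
          have hnone : rule₂ none x < rule₂ none y := by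
            rw [hrule₂none, hrule₂none]
            exact hstrict _ _ _ _ hc hlt₀.le (Or.inr hlt₀)
          obtain ⟨j₂, ⟨hle, hnle⟩, hlt2⟩ := hyx2 none hnone
          cases j₂ with
          | some j =>
              rw [hrule₂some] at hlt2
              have hle' : rle i₀ j.1 := htrans _ _ _ heq₂ ((h₃ _).mp hle)
              have hnle' : ¬ rle j.1 i₀ := fun hcc =>
                hnle ((h₂ _).mpr (htrans _ _ _ hcc heq₂))
              exact absurd hlt2 (not_lt.mpr (hall₀ j.1 hle' hnle'))
          | none => exact hnle h₄
      · exact keyA i₀ hn1 hn2 hlt₀ hall₀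
end

section
/- Let ⟨R₁, ≤₁⟩ be a rulebook on Ξ and let r' : Ξ → ℝ≥0 be a new rule with r' ∉ R₁. Define the augmented rulebook ⟨R₂, ≤₂⟩ with R₂ = R₁ ∪ {r'}, where ≤₂ agrees with ≤₁ on R₁, r' ≤₂ r' , and r' <₂ r for every r ∈ R₁ (i.e., r' ≤₂ r and ¬ r ≤₂ r' for all r ∈ R₁). Then for the induced strict relations on Ξ, x ≺₁ y implies x ≺₂ y for all x, y ∈ Ξ. -/
/-- Rule augmentation: a new rule `r'` (represented by the index `none` in
`Option ι`) is added below every rule of the original rulebook.  The induced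
strict order on realizations is preserved. -/
theorem stmt13 {Ξ ι : Type*} [Finite ι]
    (rule : ι → Ξ → NNReal) (rle : ι → ι → Prop)
    (hrefl : ∀ i, rle i i) (htrans : ∀ i j k, rle i j → rle j k → rle i k)
    (r' : Ξ → NNReal) (hnew : ∀ i : ι, rule i ≠ r')
    (rule₂ : Option ι → Ξ → NNReal)
    (hrule₂some : ∀ i : ι, rule₂ (some i) = rule i)
    (hrule₂none : rule₂ none = r')
    (rle₂ : Option ι → Option ι → Prop)
    (h₁ : ∀ i j : ι, rle₂ (some i) (some j) ↔ rle i j)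
    (h₂ : ∀ i : ι, rle₂ none (some i))
    (h₃ : ∀ i : ι, ¬ rle₂ (some i) none)
    (h₄ : rle₂ none none)
    (x y : Ξ) (h : RulebookLT rule rle x y) :
    RulebookLT rule₂ rle₂ x y := by
  obtain ⟨hle, hnle⟩ := h
  -- extract a witness rule preferring y from ¬ y ≲ x
  have hwit : ∃ i, rule i x < rule i y := by
    by_contra hc
    push_neg at hc
    exact hnle (fun i hi => absurd hi (not_lt.mpr (hc i)))
  obtain ⟨w, hw⟩ := hwit
  constructor
  · intro i hi
    match i with
    | some a =>
      rw [hrule₂some] at hi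
      obtain ⟨j, ⟨hj1, hj2⟩, hj3⟩ := hle a hi
      exact ⟨some j, ⟨(h₁ a j).mpr hj1, fun hc => hj2 ((h₁ j a).mp hc)⟩,
        by simpa [hrule₂some] using hj3⟩
    | none =>
      exact ⟨some w, ⟨h₂ w, h₃ w⟩, by simpa [hrule₂some] using hw⟩
  · intro hc
    apply hnle
    intro i hi
    obtain ⟨j, ⟨hj1, hj2⟩, hj3⟩ := hc (some i) (by simpa [hrule₂some] using hi)
    match j with
    | some b =>
      exact ⟨b, ⟨(h₁ i b).mp hj1, fun hcc => hj2 ((h₁ b i).mpr hcc)⟩,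
        by simpa [hrule₂some] using hj3⟩
    | none => exact absurd hj1 (h₃ i)
end
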